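/- In a Coxeter group W, for any w ∈ W with a fixed reduced expression, every element w' ≤ w in Bruhat order is represented by a distinguished subexpression: a sequence w_0 = e, w_1, ..., w_r with w_i w_{i-1}^{-1} ∈ {e, s_i} and w_i ≤ s_i w_{i-1} for all i, ending at w_r = w'. -/

import Mathlib

/-- Bruhat order: `v ≤ w` iff some reduced word for `w` has a subword whose product is `v`. -/
def BruhatLE {B W : Type*} [Group W] {M : CoxeterMatrix B} (cs : CoxeterSystem M W)
    (v w : W) : Prop :=
  ∃ l : List B, cs.IsReduced l ∧ cs.wordProd l = w ∧
    ∃ l' : List B, l'.Sublist l ∧ cs.wordProd l' = v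

/-- `c` is a distinguished subexpression of the reduced word `s_r ⋯ s_1`, where `s_i` is the
simple reflection attached to the `(i-1)`-th entry of the list `l` (so the word read
right-to-left is `l`): `c 0 = 1`, at each step `c (i+1) ∈ {c i, s_{i+1} · c i}`, and
`c (i+1) ≤ s_{i+1} · c i` in the Bruhat order. -/
def IsDistinguishedSubexpr {B W : Type*} [Group W] {M : CoxeterMatrix B}
    (cs : CoxeterSystem M W) (l : List B) (c : ℕ → W) : Prop :=
  c 0 = 1 ∧ ∀ i : ℕ, ∀ h : i < l.length,
    (c (i + 1) = c i ∨ c (i + 1) = cs.simple (l.get ⟨i, h⟩) * c i) ∧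
      BruhatLE cs (c (i + 1)) (cs.simple (l.get ⟨i, h⟩) * c i)

/-!
Deodhar's subexpression is built from the right end of the word. If `w' ≤ s w₁`, then
`w' ≤ w₁` or `s w' ≤ w₁`: write `w₁ = π ρ` with `ρ` reduced and apply the subword property
to the word `s · ρ` for `s w₁`. So `w' ≤ w₁` when `s w' > w'`, and `s w' ≤ w₁` when
`s w' < w'`; either way the last step of the subexpression is distinguished.

The subword property (an element below `w` is a subword of *every* word for `w`, reduced or
not) comes from comparing the Bruhat order with the order generated by steps `v < v t`, `t` a
reflection: strong exchange moves down such a chain inside a fixed word, and the lifting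
property `v ≤ w ⇒ s v ≤ w ∨ s v ≤ s w` moves up along a reduced word. Strong exchange holds
for arbitrary words, via Humphreys' action of `W` on `W × {±1}`, whose sign at `t` after
`π ω` is the parity of the number of occurrences of `t` in the right inversion sequence of `ω`.
-/

open List

theorem List.even_count_of_getElem_add_eq {α : Type*} [BEq α] {m : ℕ} {L : List α}
    (hlen : L.length = 2 * m) (hper : ∀ k (hk : k < m), L[k + m] = L[k]) (a : α) :
    Even (L.count a) := by
  have hdrop : L.drop m = L.take m := by
    refine ext_getElem (by simp [hlen]; omega) fun k h₁ h₂ => ?_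
    simp only [getElem_drop, getElem_take, add_comm m k]
    exact hper k (by simp at h₂; omega)
  rw [← take_append_drop m L, hdrop, count_append]
  exact ⟨_, rfl⟩

namespace CoxeterSystem

variable {B W : Type*} [Group W] {M : CoxeterMatrix B} (cs : CoxeterSystem M W)

local prefix:100 "s " => cs.simple
local prefix:100 "π " => cs.wordProd
local prefix:100 "ℓ " => cs.length
local prefix:100 "ris " => cs.rightInvSeq

theorem alternatingWord_two_mul (i i' : B) (m : ℕ) :
    alternatingWord i i' (2 * m) = (replicate m [i, i']).flatten := by
  induction m with
  | zero => rfl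
  | succ m ih =>
    rw [mul_add_one, alternatingWord_succ', alternatingWord_succ', ih, replicate_succ]
    simp

theorem reverse_alternatingWord_two_mul (i i' : B) (m : ℕ) :
    (alternatingWord i i' (2 * m)).reverse = alternatingWord i' i (2 * m) := by
  simp [alternatingWord_two_mul, reverse_flatten]

theorem even_count_rightInvSeq_alternatingWord [BEq W] (i i' : B) (t : W) :
    Even ((ris (alternatingWord i i' (2 * M i i'))).count t) := by
  rw [← reverse_alternatingWord_two_mul i' i, rightInvSeq_reverse, count_reverse]
  refine even_count_of_getElem_add_eq (m := M i i') (by simp) (fun k hk => ?_) t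
  rw [getElem_leftInvSeq_alternatingWord cs i' i _ _ (by omega),
    getElem_leftInvSeq_alternatingWord cs i' i _ _ (by omega)]
  simp only [prod_alternatingWord_eq_mul_pow, Nat.even_add_one, even_two_mul, not_true_eq_false,
    if_false]
  rw [show (2 * (k + M i i') + 1) / 2 = k + M i i' by omega, show (2 * k + 1) / 2 = k by omega,
    pow_add, simple_mul_simple_pow, mul_one]

section SignAction

open scoped Classical

noncomputable def simpleSignAction (i : B) : Function.End (W × ℤˣ) :=
  fun p => (s i * p.1 * s i, if p.1 = s i then -p.2 else p.2)

theorem prod_map_simpleSignAction (ω : List B) (p : W × ℤˣ) :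
    (ω.map cs.simpleSignAction).prod p
      = (π ω * p.1 * (π ω)⁻¹, (-1) ^ (ris ω).count p.1 * p.2) := by
  induction ω with
  | nil => simp; rfl
  | cons i ω ih =>
    obtain ⟨t, ε⟩ := p
    change cs.simpleSignAction i ((ω.map cs.simpleSignAction).prod (t, ε)) = _
    rw [ih, simpleSignAction, rightInvSeq, count_cons, wordProd_cons, mul_inv_rev, inv_simple]
    refine Prod.ext (by simp only; group) ?_
    by_cases h : (π ω)⁻¹ * s i * π ω = t
    · subst h
      simp [pow_succ, mul_assoc]
    · have h' : π ω * t * (π ω)⁻¹ ≠ s i := fun h' => h (by rw [← h']; group)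
      simp [h, h']

theorem isLiftable_simpleSignAction : M.IsLiftable cs.simpleSignAction := by
  intro i i'
  have hword : ((alternatingWord i i' (2 * M i i')).map cs.simpleSignAction).prod
      = (cs.simpleSignAction i * cs.simpleSignAction i') ^ M i i' := by
    simp [alternatingWord_two_mul, prod_flatten, prod_replicate]
  have hprod : π (alternatingWord i i' (2 * M i i')) = 1 := by
    simp [alternatingWord_two_mul, wordProd, prod_flatten, prod_replicate]
  funext p
  rw [← hword, prod_map_simpleSignAction, hprod,
    (cs.even_count_rightInvSeq_alternatingWord i i' p.1).neg_one_pow]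
  simp
  rfl

noncomputable def signAction : W →* Function.End (W × ℤˣ) :=
  cs.lift ⟨cs.simpleSignAction, cs.isLiftable_simpleSignAction⟩

noncomputable def rightInversionSign (w t : W) : ℤˣ := (cs.signAction w (t, 1)).2

theorem signAction_wordProd (ω : List B) :
    cs.signAction (π ω) = (ω.map cs.simpleSignAction).prod := by
  rw [wordProd, MonoidHom.map_list_prod, map_map]
  congr 1
  exact map_congr_left fun i _ => cs.lift_apply_simple cs.isLiftable_simpleSignAction i

theorem rightInversionSign_wordProd (ω : List B) (t : W) :
    cs.rightInversionSign (π ω) t = (-1) ^ (ris ω).count t := by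
  simp [rightInversionSign, signAction_wordProd, prod_map_simpleSignAction]

theorem signAction_apply (w t : W) (ε : ℤˣ) :
    cs.signAction w (t, ε) = (w * t * w⁻¹, cs.rightInversionSign w t * ε) := by
  obtain ⟨ω, -, rfl⟩ := cs.exists_isReduced w
  simp [rightInversionSign_wordProd, signAction_wordProd, prod_map_simpleSignAction]

theorem rightInversionSign_one (t : W) : cs.rightInversionSign 1 t = 1 := by
  rw [rightInversionSign, map_one]
  rfl

theorem rightInversionSign_mul (v w t : W) :
    cs.rightInversionSign (v * w) t
      = cs.rightInversionSign w t * cs.rightInversionSign v (w * t * w⁻¹) := by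
  rw [rightInversionSign, map_mul]
  change (cs.signAction v (cs.signAction w (t, 1))).2 = _
  rw [signAction_apply, signAction_apply, mul_one, mul_comm]

theorem rightInversionSign_self {t : W} (ht : cs.IsReflection t) :
    cs.rightInversionSign t t = -1 := by
  obtain ⟨u, i, rfl⟩ := ht
  have hconj : u⁻¹ * (u * s i * u⁻¹) * u⁻¹⁻¹ = s i := by group
  have hsimple : cs.rightInversionSign (s i) (s i) = -1 := by
    simp [rightInversionSign, signAction, simpleSignAction]
  have hinv :
      cs.rightInversionSign u⁻¹ (u * s i * u⁻¹) * cs.rightInversionSign u (s i) = 1 := by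
    have h := cs.rightInversionSign_mul u u⁻¹ (u * s i * u⁻¹)
    rwa [mul_inv_cancel, rightInversionSign_one, hconj, eq_comm] at h
  rw [rightInversionSign_mul, rightInversionSign_mul, hconj, hsimple, simple_mul_simple_self,
    one_mul, inv_simple, mul_left_comm, hinv, mul_one]

theorem rightInversionSign_mul_self {t : W} (ht : cs.IsReflection t) (w : W) :
    cs.rightInversionSign (w * t) t = -cs.rightInversionSign w t := by
  rw [rightInversionSign_mul, ht.mul_self, one_mul, ht.inv, rightInversionSign_self cs ht,
    neg_one_mul]

theorem mem_rightInvSeq_of_length_mul_lt (ω : List B) {t : W} (ht : cs.IsReflection t)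
    (hlt : ℓ (π ω * t) < ℓ (π ω)) : t ∈ ris ω := by
  by_contra hnot
  obtain ⟨ω', hω', hprod⟩ := cs.exists_isReduced (π ω * t)
  -- the sign at `t` changes between `π ω` and `π ω * t`, so `t` occurs in one of the sequences
  have hmem : t ∈ ris ω' := by
    by_contra hnot'
    have hflip := cs.rightInversionSign_mul_self ht (π ω)
    rw [hprod, rightInversionSign_wordProd, rightInversionSign_wordProd, count_eq_zero.mpr hnot,
      count_eq_zero.mpr hnot'] at hflip
    exact absurd hflip (by decide)
  have hlt' := (cs.isRightInversion_of_mem_rightInvSeq hω' hmem).2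
  rw [← hprod, mul_assoc, ht.mul_self, mul_one] at hlt'
  omega

end SignAction

theorem exists_sublist_wordProd_eq_mul (ω : List B) {t : W} (ht : cs.IsReflection t)
    (hlt : ℓ (π ω * t) < ℓ (π ω)) : ∃ ω', ω' <+ ω ∧ π ω' = π ω * t := by
  obtain ⟨j, hj, rfl⟩ := mem_iff_getElem.mp (cs.mem_rightInvSeq_of_length_mul_lt ω ht hlt)
  exact ⟨ω.eraseIdx j, eraseIdx_sublist ω j,
    by rw [← getD_eq_getElem _ 1 hj, wordProd_mul_getD_rightInvSeq]⟩

def BruhatStep (v w : W) : Prop := ∃ t, cs.IsReflection t ∧ w = v * t ∧ ℓ v < ℓ w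

def BruhatChain : W → W → Prop := Relation.ReflTransGen cs.BruhatStep

theorem bruhatStep_simple_mul {v : W} {i : B} (h : ℓ v < ℓ (s i * v)) :
    cs.BruhatStep v (s i * v) :=
  ⟨v⁻¹ * s i * v, ⟨v⁻¹, i, by rw [inv_inv]⟩, by group, h⟩

theorem simple_mul_bruhatStep {v : W} {i : B} (h : ℓ (s i * v) < ℓ v) :
    cs.BruhatStep (s i * v) v := by
  simpa only [simple_mul_simple_cancel_left] using
    cs.bruhatStep_simple_mul (v := s i * v) (i := i) (by rwa [simple_mul_simple_cancel_left])

variable {cs}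

theorem BruhatStep.simple_mul {v w : W} (h : cs.BruhatStep v w) (i : B) :
    cs.BruhatChain (s i * v) w ∨ cs.BruhatChain (s i * v) (s i * w) := by
  obtain ⟨t, ht, rfl, hlt⟩ := h
  rcases cs.length_simple_mul v i with hup | hdown
  · by_cases hstep : ℓ (s i * v) < ℓ (s i * (v * t))
    · exact .inr (.single ⟨t, ht, (mul_assoc _ _ _).symm, hstep⟩)
    · -- `t` is a right inversion of `s i * v` but not of `v`, so it is the first entry of the
      -- right inversion sequence of `i :: σ`
      have hlt' : ℓ (s i * v * t) < ℓ (s i * v) := by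
        rw [mul_assoc]
        exact lt_of_le_of_ne (not_lt.mp hstep)
          (by rw [← mul_assoc]; exact ht.length_mul_left_ne _)
      obtain ⟨σ, hσ, rfl⟩ := cs.exists_isReduced v
      rw [← wordProd_cons] at hlt'
      rcases mem_cons.mp (cs.mem_rightInvSeq_of_length_mul_lt _ ht hlt') with rfl | hmem
      · left
        rw [show π σ * ((π σ)⁻¹ * s i * π σ) = s i * π σ by group]
        exact .refl
      · have := (cs.isRightInversion_of_mem_rightInvSeq hσ hmem).2
        omega
  · have hstep := cs.simple_mul_bruhatStep (i := i) (v := v) (by omega)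
    exact .inl ((Relation.ReflTransGen.single hstep).tail ⟨t, ht, rfl, hlt⟩)

theorem BruhatChain.simple_mul {v w : W} (h : cs.BruhatChain v w) (i : B) :
    cs.BruhatChain (s i * v) w ∨ cs.BruhatChain (s i * v) (s i * w) := by
  induction h with
  | refl => exact .inr .refl
  | tail _ hstep ih =>
    rcases ih with ih | ih
    · exact .inl (ih.tail hstep)
    · exact (hstep.simple_mul i).imp ih.trans ih.trans

theorem bruhatChain_of_sublist {ω ω' : List B} (hω : cs.IsReduced ω) (h : ω' <+ ω) :
    cs.BruhatChain (π ω') (π ω) := by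
  induction ω generalizing ω' with
  | nil => rw [sublist_nil.mp h]; exact .refl
  | cons i ω ih =>
    have hred : cs.IsReduced ω := hω.drop 1
    have hup : ℓ (π ω) < ℓ (s i * π ω) := by
      have := cs.length_wordProd_le ω
      rw [← wordProd_cons, hω.eq, length_cons]
      omega
    have hstep := cs.bruhatStep_simple_mul hup
    rw [wordProd_cons]
    rcases sublist_cons_iff.mp h with h | ⟨r, rfl, hr⟩
    · exact (ih hred h).tail hstep
    · rw [wordProd_cons]
      exact ((ih hred hr).simple_mul i).elim (fun h => h.tail hstep) id

theorem BruhatChain.exists_sublist {v w : W} (h : cs.BruhatChain v w) {ω : List B}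
    (hω : π ω = w) : ∃ ω', ω' <+ ω ∧ π ω' = v := by
  induction h generalizing ω with
  | refl => exact ⟨ω, .refl ω, hω⟩
  | @tail w₁ _ _ hstep ih =>
    obtain ⟨t, ht, rfl, hlt⟩ := hstep
    have hcancel : π ω * t = w₁ := by rw [hω, mul_assoc, ht.mul_self, mul_one]
    obtain ⟨ω₁, hsub₁, hprod₁⟩ :=
      cs.exists_sublist_wordProd_eq_mul ω ht (by rwa [hcancel, hω])
    obtain ⟨ω', hsub', hprod'⟩ := ih (hprod₁.trans hcancel)
    exact ⟨ω', hsub'.trans hsub₁, hprod'⟩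

end CoxeterSystem

section BruhatLE

open CoxeterSystem

variable {B W : Type*} [Group W] {M : CoxeterMatrix B} {cs : CoxeterSystem M W}

local prefix:100 "s " => cs.simple
local prefix:100 "π " => cs.wordProd
local prefix:100 "ℓ " => cs.length

theorem bruhatLE_iff_bruhatChain {v w : W} : BruhatLE cs v w ↔ cs.BruhatChain v w := by
  constructor
  · rintro ⟨ω, hω, rfl, ω', hsub, rfl⟩
    exact CoxeterSystem.bruhatChain_of_sublist hω hsub
  · intro h
    obtain ⟨ω, hω, rfl⟩ := cs.exists_isReduced w
    obtain ⟨ω', hsub, hprod⟩ := h.exists_sublist rfl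
    exact ⟨ω, hω, rfl, ω', hsub, hprod⟩

theorem bruhatLE_refl (v : W) : BruhatLE cs v v :=
  bruhatLE_iff_bruhatChain.mpr .refl

theorem bruhatLE_simple_mul {v : W} {i : B} (h : ℓ v < ℓ (s i * v)) :
    BruhatLE cs v (s i * v) :=
  bruhatLE_iff_bruhatChain.mpr (.single (cs.bruhatStep_simple_mul h))

theorem simple_mul_bruhatLE {v : W} {i : B} (h : ℓ (s i * v) < ℓ v) :
    BruhatLE cs (s i * v) v :=
  bruhatLE_iff_bruhatChain.mpr (.single (cs.simple_mul_bruhatStep h))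

theorem BruhatLE.trans {u v w : W} (huv : BruhatLE cs u v) (hvw : BruhatLE cs v w) :
    BruhatLE cs u w :=
  bruhatLE_iff_bruhatChain.mpr
    ((bruhatLE_iff_bruhatChain.mp huv).trans (bruhatLE_iff_bruhatChain.mp hvw))

theorem BruhatLE.exists_sublist {v w : W} (h : BruhatLE cs v w) {ω : List B} (hω : π ω = w) :
    ∃ ω', ω' <+ ω ∧ π ω' = v :=
  (bruhatLE_iff_bruhatChain.mp h).exists_sublist hω

theorem BruhatLE.or_simple_mul {v w : W} (h : BruhatLE cs v w) (i : B) :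
    BruhatLE cs v (s i * w) ∨ BruhatLE cs (s i * v) (s i * w) := by
  obtain ⟨ρ, hρ, hρprod⟩ := cs.exists_isReduced (s i * w)
  -- `i :: ρ` is a word for `w`, possibly not reduced
  obtain ⟨ω', hsub, rfl⟩ := h.exists_sublist (ω := i :: ρ)
    (by rw [wordProd_cons, ← hρprod, simple_mul_simple_cancel_left])
  rcases sublist_cons_iff.mp hsub with hsub | ⟨r, rfl, hr⟩
  · exact .inl ⟨ρ, hρ, hρprod.symm, ω', hsub, rfl⟩
  · exact .inr ⟨ρ, hρ, hρprod.symm, r, hr,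
      by rw [wordProd_cons, simple_mul_simple_cancel_left]⟩

theorem BruhatLE.exists_distinguished_step {v w : W} (h : BruhatLE cs v w) (i : B) :
    ∃ u, BruhatLE cs u (s i * w) ∧ (v = u ∨ v = s i * u) ∧ BruhatLE cs v (s i * u) := by
  rcases cs.length_simple_mul v i with hup | hdown
  · have hv : BruhatLE cs v (s i * v) := bruhatLE_simple_mul (by omega)
    exact ⟨v, (h.or_simple_mul i).elim id hv.trans, .inl rfl, hv⟩
  · have hv : BruhatLE cs (s i * v) v := simple_mul_bruhatLE (by omega)
    refine ⟨s i * v, (h.or_simple_mul i).elim hv.trans id,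
      .inr (simple_mul_simple_cancel_left ..).symm, ?_⟩
    rw [simple_mul_simple_cancel_left]
    exact bruhatLE_refl v

end BruhatLE

section Distinguished

variable {B W : Type*} [Group W] {M : CoxeterMatrix B} {cs : CoxeterSystem M W}

theorem isDistinguishedSubexpr_nil : IsDistinguishedSubexpr cs [] fun _ => 1 :=
  ⟨rfl, fun _ h => absurd h (Nat.not_lt_zero _)⟩

theorem IsDistinguishedSubexpr.concat {l : List B} {c : ℕ → W}
    (hc : IsDistinguishedSubexpr cs l c) (b : B) {v : W}
    (hv : v = c l.length ∨ v = cs.simple b * c l.length)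
    (hle : BruhatLE cs v (cs.simple b * c l.length)) :
    IsDistinguishedSubexpr cs (l ++ [b]) (Function.update c (l.length + 1) v) := by
  refine ⟨by simpa using hc.1, fun i hi => ?_⟩
  rcases Nat.lt_succ_iff_lt_or_eq.mp (by simpa using hi) with hi' | rfl
  · rw [Function.update_of_ne (by omega), Function.update_of_ne (by omega)]
    simpa [getElem_append_left hi'] using hc.2 i hi'
  · simpa using ⟨hv, hle⟩

end Distinguished

theorem exists_distinguished_subexpression_general {B W : Type*} [Group W] {M : CoxeterMatrix B}
    (cs : CoxeterSystem M W) (w w' : W) (l : List B)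
    (hprod : cs.wordProd l.reverse = w)
    (h : BruhatLE cs w' w) :
    ∃ c : ℕ → W, IsDistinguishedSubexpr cs l c ∧ c l.length = w' := by
  subst hprod
  induction l using List.reverseRecOn generalizing w' with
  | nil =>
    obtain ⟨ω', hω', rfl⟩ := h.exists_sublist rfl
    exact ⟨fun _ => 1, isDistinguishedSubexpr_nil, by simp [sublist_nil.mp hω']⟩
  | append_singleton l b ih =>
    rw [reverse_concat', cs.wordProd_cons] at h
    obtain ⟨v, hv, hw'v, hle⟩ := h.exists_distinguished_step b
    rw [cs.simple_mul_simple_cancel_left] at hv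
    obtain ⟨c, hc, rfl⟩ := ih v hv
    exact ⟨_, hc.concat b hw'v hle, by simp⟩

/-- (Deodhar) Every element `w' ≤ w` in the Bruhat order is the endpoint of a distinguished
subexpression of a fixed reduced expression `w = s_r ⋯ s_1`. -/
theorem exists_distinguished_subexpression {B W : Type*} [Group W] {M : CoxeterMatrix B}
    (cs : CoxeterSystem M W) (w w' : W) (l : List B)
    (hred : cs.IsReduced l.reverse) (hprod : cs.wordProd l.reverse = w)
    (h : BruhatLE cs w' w) :
    ∃ c : ℕ → W, IsDistinguishedSubexpr cs l c ∧ c l.length = w' :=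
  exists_distinguished_subexpression_general cs w w' l hprod h
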